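/- Let {M′ⱼ}_{j=1}^{2m} be mutually orthogonal matrices, 𝒞 : [n] → [m] any map, χ′ᵢ = xᵢ M′_{𝒞(i)} + Rᵢ M′_{𝒞(i)+m} with Σᵢ Rᵢ = 0, and dk′ = Σ_{j=1}^{2m} M′ⱼ. Then (Σ_{i=1}^n χ′ᵢ)·(dk′)ᵀ = Σ_{i=1}^n xᵢ. -/

import Mathlib

/-! By orthonormality every key `M' k` pairs with `dk'` to the identity, so each `χ' i` decodes to
`x i + R i` whatever the index `C i` is, and the masks cancel in the sum. -/

open Matrix BigOperators

section OrthonormalKeys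

variable {ι m n R : Type*} [Fintype ι] [DecidableEq ι] [Fintype n] [DecidableEq m] [Semiring R]

theorem Matrix.mul_transpose_sum_eq_one_of_orthonormal (M : ι → Matrix m n R)
    (hM : ∀ i j, M i * (M j)ᵀ = if i = j then 1 else 0) (k : ι) :
    M k * (∑ j, M j)ᵀ = 1 := by
  rw [transpose_sum, Matrix.mul_sum, Finset.sum_eq_single k]
  · simp [hM]
  · intro j _ hjk
    simp [hM, Ne.symm hjk]
  · simp

theorem Matrix.add_mul_mul_transpose_sum_of_orthonormal {l : Type*} [Fintype m]
    (M : ι → Matrix m n R) (hM : ∀ i j, M i * (M j)ᵀ = if i = j then 1 else 0)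
    (x r : Matrix l m R) (k k' : ι) :
    (x * M k + r * M k') * (∑ j, M j)ᵀ = x + r := by
  rw [Matrix.add_mul, Matrix.mul_assoc, Matrix.mul_assoc,
    mul_transpose_sum_eq_one_of_orthonormal M hM, mul_transpose_sum_eq_one_of_orthonormal M hM,
    Matrix.mul_one, Matrix.mul_one]

end OrthonormalKeys

/-- aggregation and decoding succeed after key transformation,
even when several clients share the same transformed key index 𝒞(i). -/
theorem skt_aggregate_decode (n m a b : ℕ)
    (M' : (Fin m ⊕ Fin m) → Matrix (Fin a) (Fin b) ℝ)
    (hM' : ∀ i j, M' i * (M' j)ᵀ = if i = j then 1 else 0)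
    (C : Fin n → Fin m)
    (x R : Fin n → Matrix (Fin 1) (Fin a) ℝ) (hR : ∑ i, R i = 0)
    (χ' : Fin n → Matrix (Fin 1) (Fin b) ℝ)
    (hχ' : ∀ i, χ' i = x i * M' (Sum.inl (C i)) + R i * M' (Sum.inr (C i)))
    (dk' : Matrix (Fin a) (Fin b) ℝ) (hdk' : dk' = ∑ j, M' j) :
    (∑ i, χ' i) * dk'ᵀ = ∑ i, x i := by
  have decode_each : ∀ i, χ' i * dk'ᵀ = x i + R i := fun i => by
    rw [hχ' i, hdk', add_mul_mul_transpose_sum_of_orthonormal M' hM']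
  rw [Matrix.sum_mul, Finset.sum_congr rfl fun i _ => decode_each i, Finset.sum_add_distrib, hR, add_zero]
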